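/- Let (Z, Z') be jointly mean-zero Gaussian with Var(Z) = Var(Z') = 1 and correlation ρ. With φ(t) = max(0, t) the ReLU function, E[φ(Z) φ(Z')] = (1/(2π)) (sin θ + (π - θ) cos θ), where θ = arccos ρ. -/

import Mathlib

open MeasureTheory ProbabilityTheory Real Filter

lemma aux_radial : ∫ r in Set.Ioi (0:ℝ), r ^ 3 * Real.exp (-(r ^ 2) / 2) = 2 := by
  have h := integral_Ioi_of_hasDerivAt_of_nonneg
    (g := fun r : ℝ => -(r ^ 2 + 2) * Real.exp (-(r ^ 2) / 2))
    (g' := fun r : ℝ => r ^ 3 * Real.exp (-(r ^ 2) / 2)) (a := 0) (l := 0)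
    ?_ ?_ ?_ ?_
  · rw [h]; norm_num
  · exact (Continuous.mul (by continuity) (by continuity)).continuousWithinAt
  · intro x hx
    have h1 : HasDerivAt (fun r : ℝ => -(r ^ 2 + 2)) (-(2 * x)) x := by
      exact (((hasDerivAt_pow 2 x).add_const 2).neg).congr_deriv (by norm_num)
    have h2 : HasDerivAt (fun r : ℝ => Real.exp (-(r ^ 2) / 2)) (Real.exp (-(x ^ 2) / 2) * (-(2 * x ^ 1) / 2)) x := by
      exact ((hasDerivAt_pow 2 x).neg.div_const 2).exp
    have := h1.mul h2
    exact this.congr_deriv (by simp only [pow_one]; ring)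
  · intro x hx
    have hx0 : (0:ℝ) ≤ x := le_of_lt hx
    positivity
  · have h0 : Tendsto (fun u : ℝ => -(2 * (u * Real.exp (-u)) + 2 * Real.exp (-u))) atTop (nhds 0) := by
      have a1 := tendsto_pow_mul_exp_neg_atTop_nhds_zero 1
      simp only [pow_one] at a1
      have := ((a1.const_mul 2).add (Real.tendsto_exp_neg_atTop_nhds_zero.const_mul 2)).neg
      simpa using this
    have h2 : Tendsto (fun r : ℝ => r ^ 2 / 2) atTop atTop :=
      (tendsto_pow_atTop (by norm_num)).atTop_div_const (by norm_num)
    have := h0.comp h2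
    refine this.congr fun r => ?_
    simp only [Function.comp]
    rw [show -(r^2)/2 = -(r^2/2) by ring]
    ring

lemma aux_angular (θ : ℝ) (hθ0 : 0 ≤ θ) (hθπ : θ ≤ π) :
    ∫ α in Set.Ioo (-π) π, max 0 (Real.cos α) * max 0 (Real.cos (α - θ)) =
      (π - θ) * Real.cos θ / 2 + Real.sin θ / 2 := by
  have hπ := Real.pi_pos
  have hsub : Set.Ioo (θ - π/2) (π/2) ⊆ Set.Ioo (-π) π := by
    intro x hx
    constructor <;> [linarith [hx.1]; linarith [hx.2]]
  rw [setIntegral_eq_of_subset_of_ae_diff_eq_zero measurableSet_Ioo.nullMeasurableSet hsub ?_]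
  · -- on the small interval, both maxes are the functions themselves
    rw [setIntegral_congr_fun measurableSet_Ioo
        (g := fun α => Real.cos α * Real.cos (α - θ)) ?_]
    · rw [← MeasureTheory.integral_Ioc_eq_integral_Ioo, ← intervalIntegral.integral_of_le (by linarith)]
      have key : ∀ α ∈ Set.uIcc (θ - π/2) (π/2),
          HasDerivAt (fun α : ℝ => Real.cos θ * α / 2 + Real.sin (2*α - θ) / 4)
            (Real.cos α * Real.cos (α - θ)) α := by
        intro α _
        have h1 : HasDerivAt (fun α : ℝ => Real.cos θ * α / 2) (Real.cos θ / 2) α := by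
          simpa using ((hasDerivAt_id α).const_mul (Real.cos θ)).div_const 2
        have h2 : HasDerivAt (fun α : ℝ => Real.sin (2*α - θ) / 4)
            (Real.cos (2*α - θ) * 2 / 4) α := by
          have hin : HasDerivAt (fun α : ℝ => 2*α - θ) 2 α := by
            simpa using ((hasDerivAt_id α).const_mul 2).sub_const θ
          exact (hin.sin).div_const 4
        refine (h1.add h2).congr_deriv ?_
        have := Real.cos_add (α) (α - θ)
        have h3 : Real.cos (2*α - θ) = Real.cos α * Real.cos (α - θ) - Real.sin α * Real.sin (α - θ) := by
          rw [show 2*α - θ = α + (α - θ) by ring, Real.cos_add]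
        have h4 : Real.cos θ = Real.cos α * Real.cos (α - θ) + Real.sin α * Real.sin (α - θ) := by
          rw [show θ = α - (α - θ) by ring, Real.cos_sub]
          ring_nf
        rw [h3, h4]; ring
      rw [intervalIntegral.integral_eq_sub_of_hasDerivAt key ?_]
      · rw [show 2*(π/2) - θ = π - θ by ring, show 2*(θ - π/2) - θ = θ - π by ring]
        rw [Real.sin_pi_sub, show θ - π = -(π - θ) by ring, Real.sin_neg, Real.sin_pi_sub]
        ring
      · apply Continuous.intervalIntegrable; continuity
    · intro α hα
      obtain ⟨ha, hb⟩ := hα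
      have h1 : 0 ≤ Real.cos α := by
        apply Real.cos_nonneg_of_mem_Icc
        constructor <;> linarith
      have h2 : 0 ≤ Real.cos (α - θ) := by
        apply Real.cos_nonneg_of_mem_Icc
        constructor <;> linarith
      simp only [max_eq_right h1, max_eq_right h2]
  · refine Filter.Eventually.of_forall fun α hα => ?_
    obtain ⟨⟨hα1, hα2⟩, hα3⟩ := hα
    rw [Set.mem_Ioo, not_and_or] at hα3
    rcases hα3 with h | h
    · push_neg at h
      -- α ≤ θ - π/2
      rcases le_or_gt α (θ - 3*π/2) with h5 | h5
      · -- cos α ≤ 0 since α ∈ (-π, -π/2]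
        have : Real.cos α ≤ 0 := by
          rw [← Real.cos_neg]
          exact Real.cos_nonpos_of_pi_div_two_le_of_le (by linarith) (by linarith)
        rw [max_eq_left this, zero_mul]
      · -- cos (α - θ) ≤ 0 since θ - α ∈ [π/2, 3π/2]
        have : Real.cos (α - θ) ≤ 0 := by
          rw [show α - θ = -(θ - α) by ring, Real.cos_neg]
          exact Real.cos_nonpos_of_pi_div_two_le_of_le (by linarith) (by linarith)
        rw [max_eq_left this, mul_zero]
    · push_neg at h
      -- π/2 ≤ α
      have : Real.cos α ≤ 0 :=
        Real.cos_nonpos_of_pi_div_two_le_of_le h (by linarith)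
      rw [max_eq_left this, zero_mul]

lemma aux_main (ρ : ℝ) (hρ : ρ ∈ Set.Icc (-1 : ℝ) 1) :
    ∫ p : ℝ × ℝ, max 0 p.1 * max 0 (ρ * p.1 + Real.sqrt (1 - ρ ^ 2) * p.2)
        ∂((gaussianReal 0 1).prod (gaussianReal 0 1)) =
      (1 / (2 * π)) * (Real.sin (Real.arccos ρ) + (π - Real.arccos ρ) * Real.cos (Real.arccos ρ)) := by
  have hπ := Real.pi_pos
  set θ := Real.arccos ρ with hθdef
  have hθ0 : 0 ≤ θ := Real.arccos_nonneg ρ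
  have hθπ : θ ≤ π := Real.arccos_le_pi ρ
  have hcos : Real.cos θ = ρ := Real.cos_arccos hρ.1 hρ.2
  have hsin : Real.sin θ = Real.sqrt (1 - ρ ^ 2) := by
    rw [hθdef, Real.sin_arccos]
  set s : ℝ := Real.sqrt (1 - ρ ^ 2) with hsdef
  -- gaussian as withDensity
  set d : ℝ → NNReal := fun x => Real.toNNReal (gaussianPDFReal 0 1 x) with hddef
  have hdmeas : Measurable d := (measurable_gaussianPDFReal 0 1).real_toNNReal
  have hgauss : gaussianReal 0 1 = volume.withDensity (fun x => (d x : ENNReal)) := by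
    rw [gaussianReal_of_var_ne_zero 0 one_ne_zero]
    rfl
  have hprod : (gaussianReal 0 1).prod (gaussianReal 0 1) =
      (volume : Measure (ℝ × ℝ)).withDensity (fun p => ((d p.1 * d p.2 : NNReal) : ENNReal)) := by
    refine Measure.prod_eq fun u t hu ht => ?_
    rw [withDensity_apply _ (hu.prod ht), hgauss, withDensity_apply _ hu, withDensity_apply _ ht,
      Measure.volume_eq_prod ℝ ℝ, ← Measure.prod_restrict]
    simp_rw [ENNReal.coe_mul]
    exact lintegral_prod_mul hdmeas.coe_nnreal_ennreal.aemeasurable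
      hdmeas.coe_nnreal_ennreal.aemeasurable
  have hDmeas : Measurable (fun p : ℝ × ℝ => d p.1 * d p.2) :=
    (hdmeas.comp measurable_fst).mul (hdmeas.comp measurable_snd)
  rw [hprod, integral_withDensity_eq_integral_smul hDmeas]
  -- now an integral over ℝ² w.r.t. volume
  have hdr : ∀ x : ℝ, (d x : ℝ) = (Real.sqrt (2 * π))⁻¹ * Real.exp (-(x ^ 2) / 2) := by
    intro x
    rw [hddef]
    simp only [Real.coe_toNNReal', gaussianPDFReal]
    rw [max_eq_left (by positivity)]
    norm_num
  have key : ∫ p : ℝ × ℝ, (d p.1 * d p.2 : NNReal) •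
      (max 0 p.1 * max 0 (ρ * p.1 + s * p.2)) =
      (∫ r in Set.Ioi (0:ℝ), r ^ 3 * Real.exp (-(r ^ 2) / 2)) *
        ∫ α in Set.Ioo (-π) π, (2 * π)⁻¹ * (max 0 (Real.cos α) * max 0 (Real.cos (α - θ))) := by
    rw [← integral_comp_polarCoord_symm
      (fun p => (d p.1 * d p.2 : NNReal) • (max 0 p.1 * max 0 (ρ * p.1 + s * p.2)))]
    rw [show polarCoord.target = Set.Ioi (0:ℝ) ×ˢ Set.Ioo (-π) π from polarCoord_target]
    rw [setIntegral_congr_fun (measurableSet_Ioi.prod measurableSet_Ioo)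
      (g := fun p => (p.1 ^ 3 * Real.exp (-(p.1 ^ 2) / 2)) *
        ((2 * π)⁻¹ * (max 0 (Real.cos p.2) * max 0 (Real.cos (p.2 - θ))))) ?_]
    · rw [Measure.volume_eq_prod ℝ ℝ]
      exact setIntegral_prod_mul (fun r : ℝ => r ^ 3 * Real.exp (-(r ^ 2) / 2))
        (fun α : ℝ => (2 * π)⁻¹ * (max 0 (Real.cos α) * max 0 (Real.cos (α - θ)))) _ _
    · rintro ⟨r, α⟩ ⟨hr, hα⟩
      simp only [Set.mem_Ioi] at hr
      have hr0 : (0:ℝ) ≤ r := hr.le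
      simp only [polarCoord_symm_apply, NNReal.smul_def, smul_eq_mul, NNReal.coe_mul]
      rw [hdr, hdr]
      have e1 : max 0 (r * Real.cos α) = r * max 0 (Real.cos α) := by
        rw [mul_max_of_nonneg _ _ hr0, mul_zero]
      have e2 : max 0 (ρ * (r * Real.cos α) + s * (r * Real.sin α)) =
          r * max 0 (Real.cos (α - θ)) := by
        have harg : ρ * (r * Real.cos α) + s * (r * Real.sin α) = r * Real.cos (α - θ) := by
          rw [Real.cos_sub, hcos, hsin]
          ring
        rw [harg, mul_max_of_nonneg _ _ hr0, mul_zero]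
      have eE : Real.exp (-((r * Real.cos α) ^ 2) / 2) * Real.exp (-((r * Real.sin α) ^ 2) / 2) =
          Real.exp (-(r ^ 2) / 2) := by
        rw [← Real.exp_add]
        congr 1
        nlinarith [Real.sin_sq_add_cos_sq α]
      have e4 : (Real.sqrt (2 * π))⁻¹ * (Real.sqrt (2 * π))⁻¹ = (2 * π)⁻¹ := by
        rw [← mul_inv, Real.mul_self_sqrt (by positivity)]
      rw [e1, e2, show r * ((Real.sqrt (2 * π))⁻¹ * Real.exp (-((r * Real.cos α) ^ 2) / 2) *
          ((Real.sqrt (2 * π))⁻¹ * Real.exp (-((r * Real.sin α) ^ 2) / 2)) *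
          (r * (0 ⊔ Real.cos α) * (r * (0 ⊔ Real.cos (α - θ))))) =
        ((Real.sqrt (2 * π))⁻¹ * (Real.sqrt (2 * π))⁻¹) *
          (Real.exp (-((r * Real.cos α) ^ 2) / 2) * Real.exp (-((r * Real.sin α) ^ 2) / 2)) *
          (r ^ 3 * ((0 ⊔ Real.cos α) * (0 ⊔ Real.cos (α - θ)))) from by ring, eE, e4]
      ring
  rw [key, MeasureTheory.integral_const_mul _ _, aux_radial, aux_angular θ hθ0 hθπ, hcos]
  field_simp
  ring

/-- Arc-cosine kernel identity: expected product of ReLU activations of correlated standard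
Gaussians `Z = X`, `Z' = ρ X + √(1-ρ²) Y`, with `X, Y` independent standard normals. -/
theorem stmt_10 {Ω : Type*} [MeasurableSpace Ω] (μ : Measure Ω) [IsProbabilityMeasure μ]
    (X Y : Ω → ℝ) (hXm : Measurable X) (hYm : Measurable Y)
    (hX : μ.map X = gaussianReal 0 1) (hY : μ.map Y = gaussianReal 0 1)
    (hindep : IndepFun X Y μ)
    (ρ : ℝ) (hρ : ρ ∈ Set.Icc (-1 : ℝ) 1) :
    let Z : Ω → ℝ := X
    let Z' : Ω → ℝ := fun ω => ρ * X ω + Real.sqrt (1 - ρ ^ 2) * Y ω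
    let θ := Real.arccos ρ
    ∫ ω, max 0 (Z ω) * max 0 (Z' ω) ∂μ =
      (1 / (2 * π)) * (Real.sin θ + (π - θ) * Real.cos θ) := by
  intro Z Z' θ
  have hmap : μ.map (fun ω => (X ω, Y ω)) = (gaussianReal 0 1).prod (gaussianReal 0 1) := by
    have h := (indepFun_iff_map_prod_eq_prod_map_map hXm.aemeasurable hYm.aemeasurable).mp hindep
    rw [hX, hY] at h
    exact h
  have hFc : Continuous fun p : ℝ × ℝ =>
      max 0 p.1 * max 0 (ρ * p.1 + Real.sqrt (1 - ρ ^ 2) * p.2) := by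
    fun_prop
  have step : ∫ ω, max 0 (Z ω) * max 0 (Z' ω) ∂μ =
      ∫ p : ℝ × ℝ, max 0 p.1 * max 0 (ρ * p.1 + Real.sqrt (1 - ρ ^ 2) * p.2)
        ∂((gaussianReal 0 1).prod (gaussianReal 0 1)) := by
    rw [← hmap, integral_map (hXm.prodMk hYm).aemeasurable hFc.aestronglyMeasurable]
  rw [step, aux_main ρ hρ]
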